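/- arXiv:2204.02913 — 2 statements merged into one kernel-verified Lean document; each statement's English description precedes it below -/
import Mathlib

section
/- Let d ≥ 2, k ≥ 1, e ≥ 2 be integers with e ≤ d-1 and d ≤ k+e+1. Then the domination number of the circulant digraph Γ(ℤ_{dk+e}, {1, 2, …, d-1}) equals k+1, and the same holds for Γ(ℤ_{dk+e}, {-1, 1, 2, …, d-2}). -/
open Filter

/-- Lower density of a set of integers. -/
noncomputable def lowerDensity (D : Set ℤ) : ℝ :=
  Filter.liminf (fun n : ℕ =>
    ((D ∩ Set.Icc (-(n : ℤ)) (n : ℤ)).ncard : ℝ) / (2 * (n : ℝ) + 1)) Filter.atTop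

/-- `D` is a dominating set of the integer distance digraph `Γ(ℤ,S)`. -/
def Dominating (S D : Set ℤ) : Prop :=
  ∀ m : ℤ, m ∈ D ∨ ∃ u ∈ D, ∃ s ∈ S, m = u + s

/-- Domination ratio of `Γ(ℤ,S)`. -/
noncomputable def dominationRatio (S : Set ℤ) : ℝ :=
  sInf (lowerDensity '' {D : Set ℤ | Dominating S D})

/-- `D` is an efficient dominating set of `Γ(ℤ,S)`: every integer is dominated
by exactly one element of `D`. -/
def EffDominating (S D : Set ℤ) : Prop :=
  ∀ m : ℤ, ∃! u, u ∈ D ∧ (u = m ∨ m - u ∈ S)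

/-- `D'` is a dominating set of the circulant digraph `Γ(ℤ_n, S')`. -/
def DominatingC {n : ℕ} (S' D' : Set (ZMod n)) : Prop :=
  ∀ m : ZMod n, m ∈ D' ∨ ∃ u ∈ D', ∃ s ∈ S', m = u + s

/-- Domination number of the circulant digraph `Γ(ℤ_n, S')`. -/
noncomputable def dominationNumber {n : ℕ} (S' : Set (ZMod n)) : ℕ :=
  sInf {m : ℕ | ∃ D' : Set (ZMod n), DominatingC S' D' ∧ D'.ncard = m}

/-! A vertex dominates itself and its `|S| ≤ d - 1` out-neighbours, so a dominating set of
`ℤ_n` has at least `n / d > k` elements. Conversely, since `n ≤ d (k + 1)`, the `k + 1`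
residues `c, c + d, …, c + k d` cut `ℤ_n` into blocks of length at most `d`; with `c = 0` each
block is covered by the jumps `1, …, d - 1`, and with `c = 1` by the jumps `-1, 1, …, d - 2`. -/

open Pointwise

theorem dominationNumber_eq_of_le_ncard {n : ℕ} {S : Set (ZMod n)} {m : ℕ}
    (hex : ∃ D : Set (ZMod n), DominatingC S D ∧ D.ncard = m)
    (hle : ∀ D : Set (ZMod n), DominatingC S D → m ≤ D.ncard) :
    dominationNumber S = m :=
  le_antisymm (Nat.sInf_le hex) <| le_csInf ⟨m, hex⟩ fun _ ⟨D, hD, hcard⟩ => hcard ▸ hle D hD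

theorem DominatingC.le_ncard_mul {n : ℕ} [NeZero n] {S D : Set (ZMod n)}
    (hD : DominatingC S D) : n ≤ D.ncard * (S.ncard + 1) := by
  have hcover : (Set.univ : Set (ZMod n)) ⊆ D + insert 0 S := by
    intro x _
    rcases hD x with hx | ⟨u, hu, s, hs, rfl⟩
    · exact ⟨x, hx, 0, Set.mem_insert _ _, add_zero x⟩
    · exact ⟨u, hu, s, Set.mem_insert_of_mem _ hs, rfl⟩
  calc n = (Set.univ : Set (ZMod n)).ncard := by simp [Set.ncard_univ]
    _ ≤ (D + insert 0 S).ncard := Set.ncard_le_ncard hcover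
    _ ≤ D.ncard * (insert 0 S).ncard := by
      simpa only [Nat.card_coe_set_eq] using Set.natCard_add_le (s := D) (t := insert 0 S)
    _ ≤ D.ncard * (S.ncard + 1) := by gcongr; exact Set.ncard_insert_le _ _

theorem DominatingC.lt_ncard {n d k : ℕ} [NeZero n] {S D : Set (ZMod n)}
    (hD : DominatingC S D) (hS : S.ncard + 1 ≤ d) (hn : d * k < n) : k < D.ncard := by
  by_contra! hle
  have : n ≤ k * d := hD.le_ncard_mul.trans (Nat.mul_le_mul hle hS)
  rw [Nat.mul_comm] at this
  omega

theorem ncard_image_Icc_le {α : Type*} (f : ℕ → α) (a b : ℕ) :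
    (f '' Set.Icc a b).ncard ≤ b + 1 - a := by
  simpa only [← Finset.coe_Icc, Set.ncard_coe_finset, Nat.card_Icc] using
    Set.ncard_image_le (f := f) (Finset.Icc a b).finite_toSet

def progression (n c d k : ℕ) : Set (ZMod n) :=
  (fun j : ℕ => ((c + j * d : ℕ) : ZMod n)) '' Set.Iic k

theorem natCast_mem_progression {n c d k j : ℕ} (hj : j ≤ k) :
    ((c + j * d : ℕ) : ZMod n) ∈ progression n c d k :=
  ⟨j, hj, rfl⟩

theorem ncard_progression {n c d k : ℕ} (hd : 0 < d) (hn : c + k * d < n) :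
    (progression n c d k).ncard = k + 1 := by
  have hinj : Set.InjOn (fun j : ℕ => ((c + j * d : ℕ) : ZMod n)) (Set.Iic k) := by
    intro a ha b hb hab
    have ha' : c + a * d < n := lt_of_le_of_lt (by gcongr; exact ha) hn
    have hb' : c + b * d < n := lt_of_le_of_lt (by gcongr; exact hb) hn
    have hval := congrArg ZMod.val hab
    rw [ZMod.val_cast_of_lt ha', ZMod.val_cast_of_lt hb'] at hval
    exact Nat.eq_of_mul_eq_mul_right hd (by omega)
  rw [progression, hinj.ncard_image, ← Finset.coe_Iic, Set.ncard_coe_finset, Nat.card_Iic]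

theorem ZMod.exists_eq_natCast_add_mul {n d k : ℕ} [NeZero n] (hd : 0 < d)
    (hn : n ≤ d * (k + 1)) (x : ZMod n) :
    ∃ j ≤ k, ∃ r < d, x = ((r + j * d : ℕ) : ZMod n) := by
  refine ⟨x.val / d, ?_, x.val % d, Nat.mod_lt _ hd, ?_⟩
  · rw [Nat.le_iff_lt_add_one, Nat.div_lt_iff_lt_mul hd, Nat.mul_comm]
    exact lt_of_lt_of_le x.val_lt hn
  · rw [Nat.mod_add_div', ZMod.natCast_zmod_val]

theorem dominatingC_Icc_progression {n d k : ℕ} [NeZero n] (hd : 0 < d)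
    (hn : n ≤ d * (k + 1)) :
    DominatingC ((fun j : ℕ => (j : ZMod n)) '' Set.Icc 1 (d - 1)) (progression n 0 d k) := by
  intro x
  obtain ⟨j, hj, r, hr, rfl⟩ := ZMod.exists_eq_natCast_add_mul hd hn x
  rcases Nat.eq_zero_or_pos r with rfl | hr0
  · exact Or.inl (natCast_mem_progression hj)
  · refine Or.inr ⟨_, natCast_mem_progression hj, r, ⟨r, ⟨hr0, by omega⟩, rfl⟩, ?_⟩
    push_cast
    ring

/-- A vertex `r + j d` with `r = 0, 1` or `r ≥ 2` is dominated by `1 + j d` through the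
jump `-1`, trivially, or through the jump `r - 1`. -/
theorem dominatingC_neg_one_Icc_progression {n d k : ℕ} [NeZero n] (hd : 0 < d)
    (hn : n ≤ d * (k + 1)) :
    DominatingC ({(-1 : ZMod n)} ∪ (fun j : ℕ => (j : ZMod n)) '' Set.Icc 1 (d - 2))
      (progression n 1 d k) := by
  intro x
  obtain ⟨j, hj, r, hr, rfl⟩ := ZMod.exists_eq_natCast_add_mul hd hn x
  have hcenter := natCast_mem_progression (n := n) (c := 1) (d := d) hj
  match r, hr with
  | 0, _ => exact Or.inr ⟨_, hcenter, -1, Or.inl rfl, by push_cast; ring⟩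
  | 1, _ => exact Or.inl hcenter
  | s + 2, hs =>
    refine Or.inr ⟨_, hcenter, ((s + 1 : ℕ) : ZMod n), Or.inr ⟨s + 1, ⟨by omega, by omega⟩, rfl⟩, ?_⟩
    push_cast
    ring

theorem stmt_18_general (d k e : ℕ) (hd : 2 ≤ d) (he1 : 2 ≤ e) (he2 : e ≤ d - 1) :
    dominationNumber ((fun j : ℕ => (j : ZMod (d * k + e))) '' Set.Icc 1 (d - 1)) = k + 1 ∧
    dominationNumber ({(-1 : ZMod (d * k + e))} ∪
        (fun j : ℕ => (j : ZMod (d * k + e))) '' Set.Icc 1 (d - 2)) = k + 1 := by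
  have : NeZero (d * k + e) := ⟨by omega⟩
  have hn : d * k + e ≤ d * (k + 1) := by rw [Nat.mul_succ]; omega
  have hlt : d * k < d * k + e := by omega
  have hprog : ∀ c ≤ 1, (progression (d * k + e) c d k).ncard = k + 1 := fun c hc =>
    ncard_progression (by omega) (by rw [Nat.mul_comm]; omega)
  refine ⟨dominationNumber_eq_of_le_ncard
      ⟨_, dominatingC_Icc_progression (by omega) hn, hprog 0 (by omega)⟩
      fun D hD => hD.lt_ncard ?_ hlt,
    dominationNumber_eq_of_le_ncard
      ⟨_, dominatingC_neg_one_Icc_progression (by omega) hn, hprog 1 le_rfl⟩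
      fun D hD => hD.lt_ncard ?_ hlt⟩
  · have := ncard_image_Icc_le (fun j : ℕ => (j : ZMod (d * k + e))) 1 (d - 1)
    omega
  · have := Set.ncard_union_le {(-1 : ZMod (d * k + e))}
      ((fun j : ℕ => (j : ZMod (d * k + e))) '' Set.Icc 1 (d - 2))
    have := ncard_image_Icc_le (fun j : ℕ => (j : ZMod (d * k + e))) 1 (d - 2)
    rw [Set.ncard_singleton] at *
    omega

theorem stmt_18 (d k e : ℕ) (hd : 2 ≤ d) (hk : 1 ≤ k) (he1 : 2 ≤ e) (he2 : e ≤ d - 1)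
    (hde : d ≤ k + e + 1) :
    dominationNumber ((fun j : ℕ => (j : ZMod (d * k + e))) '' Set.Icc 1 (d - 1)) = k + 1 ∧
    dominationNumber ({(-1 : ZMod (d * k + e))} ∪
        (fun j : ℕ => (j : ZMod (d * k + e))) '' Set.Icc 1 (d - 2)) = k + 1 :=
  stmt_18_general d k e hd he1 he2
end

section
/- Let d ≥ 2 and k ≥ 1 be integers with d ≤ 2k+2. Then the domination number of the circulant digraph Γ(ℤ_{2dk-d+2}, {1, 2, …, d-2, dk}) equals 2k. -/
open Filter

theorem stmt_19 (d k : ℕ) (hd : 2 ≤ d) (hk : 1 ≤ k) (hdk : d ≤ 2 * k + 2) :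
    dominationNumber
      ((fun j : ℕ => (j : ZMod (2 * d * k - d + 2))) '' Set.Icc 1 (d - 2) ∪
        {((d * k : ℕ) : ZMod (2 * d * k - d + 2))}) = 2 * k := by
  obtain ⟨a, ha⟩ : ∃ a, d * k = a := ⟨_, rfl⟩
  have hda : d ≤ a := ha ▸ Nat.le_mul_of_pos_right d hk
  set n := 2 * d * k - d + 2 with hn
  have hnd : n + d = 2 * a + 2 := by
    have : 2 * d * k = 2 * a := by rw [← ha]; ring
    omega
  have hnpos : 0 < n := by omega
  haveI : NeZero n := ⟨hnpos.ne'⟩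
  rw [ha]
  set S : Set (ZMod n) :=
    (fun j : ℕ => (j : ZMod n)) '' Set.Icc 1 (d - 2) ∪ {((a : ℕ) : ZMod n)} with hS
  -- cast injectivity below n
  have hcastinj : ∀ x y : ℕ, x < n → y < n → (x : ZMod n) = (y : ZMod n) → x = y := by
    intro x y hx hy h
    have := congrArg ZMod.val h
    rwa [ZMod.val_cast_of_lt hx, ZMod.val_cast_of_lt hy] at this
  have hmul : ∀ j, j < k → d * j + d ≤ a := by
    intro j hj
    calc d * j + d = d * (j + 1) := by ring
      _ ≤ d * k := Nat.mul_le_mul_left d hj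
      _ = a := ha
  -- the dominating set
  set f1 : ℕ → ZMod n := fun j => ((d * j : ℕ) : ZMod n) with hf1
  set f2 : ℕ → ZMod n := fun j => ((a + 1 + d * j : ℕ) : ZMod n) with hf2
  set F : Finset (ZMod n) :=
    (Finset.range k).image f1 ∪ (Finset.range k).image f2 with hF
  have hb1 : ∀ j, j < k → d * j < n := by
    intro j hj; have := hmul j hj; omega
  have hb2 : ∀ j, j < k → a + 1 + d * j < n := by
    intro j hj; have := hmul j hj; omega
  have hcard : F.card = 2 * k := by
    have hinj1 : Set.InjOn f1 ↑(Finset.range k) := by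
      intro x hx y hy hxy
      simp only [Finset.coe_range, Set.mem_Iio] at hx hy
      have := hcastinj _ _ (hb1 x hx) (hb1 y hy) hxy
      exact Nat.eq_of_mul_eq_mul_left (by omega) this
    have hinj2 : Set.InjOn f2 ↑(Finset.range k) := by
      intro x hx y hy hxy
      simp only [Finset.coe_range, Set.mem_Iio] at hx hy
      have := hcastinj _ _ (hb2 x hx) (hb2 y hy) hxy
      have : d * x = d * y := by omega
      exact Nat.eq_of_mul_eq_mul_left (by omega) this
    have hdisj : Disjoint ((Finset.range k).image f1) ((Finset.range k).image f2) := by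
      rw [Finset.disjoint_left]
      rintro z hz1 hz2
      simp only [Finset.mem_image, Finset.mem_range] at hz1 hz2
      obtain ⟨x, hx, hxz⟩ := hz1
      obtain ⟨y, hy, hyz⟩ := hz2
      have heq := hcastinj _ _ (hb1 x hx) (hb2 y hy) (hxz.trans hyz.symm)
      have h1 := hmul x hx
      omega
    rw [hF, Finset.card_union_of_disjoint hdisj, Finset.card_image_of_injOn hinj1,
      Finset.card_image_of_injOn hinj2, Finset.card_range]
    omega
  have hmem1 : ∀ j, j < k → f1 j ∈ F := by
    intro j hj
    exact Finset.mem_union_left _ (Finset.mem_image.2 ⟨j, Finset.mem_range.2 hj, rfl⟩)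
  have hmem2 : ∀ j, j < k → f2 j ∈ F := by
    intro j hj
    exact Finset.mem_union_right _ (Finset.mem_image.2 ⟨j, Finset.mem_range.2 hj, rfl⟩)
  have hsmem1 : ∀ r : ℕ, 1 ≤ r → r ≤ d - 2 → ((r : ℕ) : ZMod n) ∈ S := by
    intro r h1 h2
    exact Set.mem_union_left _ ⟨r, Set.mem_Icc.2 ⟨h1, h2⟩, rfl⟩
  have hsmem2 : ((a : ℕ) : ZMod n) ∈ S := Set.mem_union_right _ rfl
  -- domination
  have hdomF : DominatingC S ↑F := by
    intro m
    obtain ⟨t, ht, hmt⟩ : ∃ t : ℕ, t < n ∧ (t : ZMod n) = m :=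
      ⟨m.val, ZMod.val_lt m, by simp [ZMod.natCast_val, ZMod.cast_id]⟩
    rcases lt_or_ge t a with h1 | h1
    · -- t < a = d*k
      obtain ⟨j, r, hdm, hr, hj⟩ : ∃ j r, d * j + r = t ∧ r < d ∧ j < k := by
        refine ⟨t / d, t % d, Nat.div_add_mod t d, Nat.mod_lt t (by omega), ?_⟩
        refine (Nat.div_lt_iff_lt_mul (by omega)).2 ?_
        calc t < a := h1
          _ = d * k := ha.symm
          _ = k * d := by ring
      have hjb := hmul j hj
      rcases Nat.lt_or_ge r 1 with hr0 | hr1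
      · -- r = 0 : m ∈ F
        left
        refine Finset.mem_coe.2 ?_
        have : m = f1 j := by
          rw [hf1, ← hmt]; congr 1; omega
        rw [this]; exact hmem1 j hj
      · rcases Nat.lt_or_ge r (d - 1) with hr2 | hr2
        · -- 1 ≤ r ≤ d-2
          right
          refine ⟨f1 j, hmem1 j hj, ((r : ℕ) : ZMod n), hsmem1 r hr1 (by omega), ?_⟩
          rw [← hmt, hf1]
          rw [← Nat.cast_add]
          congr 1; omega
        · -- r = d - 1 : wraparound
          right
          refine ⟨f2 j, hmem2 j hj, ((a : ℕ) : ZMod n), hsmem2, ?_⟩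
          have hnat : (a + 1 + d * j) + a = n + t := by omega
          rw [← hmt, hf2]
          rw [← Nat.cast_add, hnat, Nat.cast_add, ZMod.natCast_self, zero_add]
    · -- t ≥ a
      obtain ⟨w, hw⟩ : ∃ w, w + a = t := ⟨t - a, by omega⟩
      have hwb : w + a < n := by omega
      obtain ⟨j, r, hdm, hr, hj⟩ : ∃ j r, d * j + r = w ∧ r < d ∧ j < k := by
        refine ⟨w / d, w % d, Nat.div_add_mod w d, Nat.mod_lt w (by omega), ?_⟩
        refine (Nat.div_lt_iff_lt_mul (by omega)).2 ?_
        have : k * d = a := by rw [← ha]; ring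
        omega
      have hjb := hmul j hj
      rcases Nat.lt_or_ge r 1 with hr0 | hr1
      · -- r = 0 : m = d*j + a
        right
        refine ⟨f1 j, hmem1 j hj, ((a : ℕ) : ZMod n), hsmem2, ?_⟩
        rw [← hmt, hf1, ← Nat.cast_add]
        congr 1; omega
      · rcases Nat.lt_or_ge r 2 with hr2 | hr2
        · -- r = 1 : m ∈ F, m = a + 1 + d*j
          left
          refine Finset.mem_coe.2 ?_
          have : m = f2 j := by
            rw [hf2, ← hmt]; congr 1; omega
          rw [this]; exact hmem2 j hj
        · -- r ≥ 2
          right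
          refine ⟨f2 j, hmem2 j hj, ((r - 1 : ℕ) : ZMod n), hsmem1 (r-1) (by omega) (by omega), ?_⟩
          rw [← hmt, hf2, ← Nat.cast_add]
          congr 1; omega
  -- lower bound
  have hlow : ∀ m : ℕ, (∃ D' : Set (ZMod n), DominatingC S D' ∧ D'.ncard = m) → 2 * k ≤ m := by
    rintro m ⟨D', hD, rfl⟩
    classical
    have hfin : D'.Finite := Set.toFinite _
    set T : ZMod n → Finset (ZMod n) := fun u =>
      insert u (((Finset.Icc 1 (d - 2)).image fun j => u + ((j : ℕ) : ZMod n)) ∪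
        {u + ((a : ℕ) : ZMod n)}) with hT
    have hTcard : ∀ u, (T u).card ≤ d := by
      intro u
      calc (T u).card ≤ (((Finset.Icc 1 (d - 2)).image fun j => u + ((j : ℕ) : ZMod n)) ∪
            {u + ((a : ℕ) : ZMod n)}).card + 1 := Finset.card_insert_le _ _
        _ ≤ (((Finset.Icc 1 (d - 2)).image fun j => u + ((j : ℕ) : ZMod n)).card
            + ({u + ((a : ℕ) : ZMod n)} : Finset (ZMod n)).card) + 1 :=
              by gcongr; exact Finset.card_union_le _ _
        _ ≤ ((d - 2) + 1) + 1 := by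
            gcongr
            · calc ((Finset.Icc 1 (d - 2)).image fun j => u + ((j : ℕ) : ZMod n)).card
                  ≤ (Finset.Icc 1 (d - 2)).card := Finset.card_image_le
                _ = d - 2 := by rw [Nat.card_Icc]; omega
            · exact le_of_eq (Finset.card_singleton _)
        _ ≤ d := by omega
    have hcover : ∀ m : ZMod n, ∃ u ∈ hfin.toFinset, m ∈ T u := by
      intro x
      rcases hD x with hx | ⟨u, hu, s, hs, hxs⟩
      · exact ⟨x, hfin.mem_toFinset.2 hx, Finset.mem_insert_self _ _⟩
      · refine ⟨u, hfin.mem_toFinset.2 hu, ?_⟩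
        rcases hs with ⟨j, hj, hjs⟩ | hs
        · refine Finset.mem_insert_of_mem (Finset.mem_union_left _ ?_)
          refine Finset.mem_image.2 ⟨j, ?_, ?_⟩
          · rw [Finset.mem_Icc]; exact Set.mem_Icc.1 hj
          · rw [← hjs] at hxs; exact hxs.symm
        · refine Finset.mem_insert_of_mem (Finset.mem_union_right _ ?_)
          rw [Finset.mem_singleton, hxs, hs]
    have hnle : n ≤ hfin.toFinset.card * d := by
      calc n = Fintype.card (ZMod n) := (ZMod.card n).symm
        _ = (Finset.univ : Finset (ZMod n)).card := Finset.card_univ.symm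
        _ ≤ (hfin.toFinset.biUnion T).card := by
            apply Finset.card_le_card
            intro x _
            rcases hcover x with ⟨u, hu, hx⟩
            exact Finset.mem_biUnion.2 ⟨u, hu, hx⟩
        _ ≤ ∑ u ∈ hfin.toFinset, (T u).card := Finset.card_biUnion_le
        _ ≤ ∑ _u ∈ hfin.toFinset, d := Finset.sum_le_sum fun u _ => hTcard u
        _ = hfin.toFinset.card * d := by rw [Finset.sum_const, smul_eq_mul]
    have hcardEq : D'.ncard = hfin.toFinset.card := Set.ncard_eq_toFinset_card _ hfin
    rw [hcardEq]
    set c := hfin.toFinset.card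
    by_contra hcon
    push_neg at hcon
    have e3 : (c + 1) * d ≤ 2 * k * d := Nat.mul_le_mul_right d (by omega)
    have e1 : (c + 1) * d = c * d + d := by ring
    have e2 : 2 * k * d = 2 * a := by rw [← ha]; ring
    linarith
  -- conclude
  unfold dominationNumber
  apply le_antisymm
  · exact Nat.sInf_le ⟨↑F, hdomF, by rw [Set.ncard_coe_finset, hcard]⟩
  · exact le_csInf ⟨2 * k, ↑F, hdomF, by rw [Set.ncard_coe_finset, hcard]⟩
      (fun m hm => hlow m hm)
end
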